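/- arXiv:2207.02289 — 7 statements merged into one kernel-verified Lean document; each statement's English description precedes it below -/
import Mathlib

section
/- Under the ACCMV assumption with a single primary variable, the joint density p(ℓ, a) of (L, A) is nonparametrically identified from the observed-data distribution: p(ℓ, A = 1) is directly observed, and p(ℓ, A = 0) = Σ_r ∫ p(ℓ | x_r, R ≥ r, A = 1) p(x_r, R = r, A = 0) dx_r, where every factor on the right-hand side is a functional of the observed data. -/
open MeasureTheory

/-- **Proposition 1: nonparametric identification of `p(ℓ, a)` under ACCMV
(single primary variable).**
For each response pattern `r ∈ {0,1}^p`, densities on the observed covariates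
`x_r ∈ ℝ^{|r|}` (indexed by the subtype `{i // r i = true}`):
* `pJ0 r ℓ x = p(ℓ, x_r, R = r, A = 0)` (extrapolated full-data density),
* `pJ1 r ℓ x = p(ℓ, x_r, R ≥ r, A = 1)` (observed),
* `qX0 r x = p(x_r, R = r, A = 0)` (observed) and
  `qX1 r x = p(x_r, R ≥ r, A = 1)` (observed), the marginals of the above.
`pA1 ℓ = p(ℓ, A = 1)` is directly observed, and under the ACCMV assumption
`p(ℓ | x_r, R = r, A = 0) = p(ℓ | x_r, R ≥ r, A = 1)` the missing part satisfies
`p(ℓ, A = 0) = Σ_r ∫ p(ℓ | x_r, R ≥ r, A = 1) p(x_r, R = r, A = 0) dx_r`,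
where every factor on the right-hand side is a functional of the observed data;
hence `p(ℓ, a)` is nonparametrically identified. -/
theorem accmv_nonparametric_identification_single
    {p : ℕ}
    (pJ0 pJ1 : (r : Fin p → Bool) → ℝ → ({i : Fin p // r i = true} → ℝ) → ℝ)
    (qX0 qX1 : (r : Fin p → Bool) → ({i : Fin p // r i = true} → ℝ) → ℝ)
    (pA0 : ℝ → ℝ)
    -- marginalization consistency of the joint densities
    (hqX0 : ∀ r x, qX0 r x = ∫ ℓ : ℝ, pJ0 r ℓ x)
    (hqX1 : ∀ r x, qX1 r x = ∫ ℓ : ℝ, pJ1 r ℓ x)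
    -- positivity so conditionals are well defined
    (hqX0pos : ∀ r x, 0 < qX0 r x) (hqX1pos : ∀ r x, 0 < qX1 r x)
    -- `p(ℓ, A = 0)` decomposes over the missing patterns
    (hpA0 : ∀ ℓ, pA0 ℓ = ∑ r : Fin p → Bool, ∫ x, pJ0 r ℓ x)
    -- ACCMV: `p(ℓ | x_r, R = r, A = 0) = p(ℓ | x_r, R ≥ r, A = 1)`
    (haccmv : ∀ r ℓ x, pJ0 r ℓ x / qX0 r x = pJ1 r ℓ x / qX1 r x) :
    ∀ ℓ, pA0 ℓ = ∑ r : Fin p → Bool, ∫ x, (pJ1 r ℓ x / qX1 r x) * qX0 r x := by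
  intro ℓ
  rw [hpA0]
  refine Finset.sum_congr rfl fun r _ => ?_
  congr 1
  funext x
  rw [← haccmv r ℓ x, div_mul_cancel₀]
  exact (hqX0pos r x).ne'
end

section
/- Under the ACCMV assumption in odds form, for any integrable function f the missing-pattern contribution satisfies the IPW identity: θ_{0,r} := ∫ f(ℓ) p(ℓ, x_r, R = r, A = 0) dx_r dℓ = E[ f(L) · O_r(X_r) · I(R ≥ r, A = 1) ], where O_r(x_r) = P(R = r, A = 0 | X_r = x_r) / P(R ≥ r, A = 1 | X_r = x_r). -/
open MeasureTheory Set


lemma accmv_aux_phi {Ω : Type*} [MeasurableSpace Ω] {p : ℕ} (X : Ω → Fin p → ℝ)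
    (L : Ω → ℝ) {r : Fin p → Bool} (Xr : Ω → {i : Fin p // r i = true} → ℝ)
    (hX : Measurable X) (hL : Measurable L) (hXr : Xr = fun ω i => X ω i.1) :
    Measurable (fun ω => (Xr ω, L ω)) := by
  subst hXr
  exact (measurable_pi_lambda _ fun i => hX.eval).prodMk hL

lemma accmv_aux_I0 {Ω : Type*} [MeasurableSpace Ω] (μ : Measure Ω) [IsProbabilityMeasure μ]
    {p : ℕ} (R : Ω → Fin p → Bool) (A : Ω → Bool) (hR : Measurable R) (hA : Measurable A)
    (r : Fin p → Bool) (I0 : Ω → ℝ)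
    (hI0 : I0 = ({ω | R ω = r ∧ A ω = false} : Set Ω).indicator fun _ => (1 : ℝ)) :
    Integrable I0 μ := by
  rw [hI0]
  refine (integrable_const (1:ℝ)).indicator ?_
  have : ({ω | R ω = r ∧ A ω = false} : Set Ω) = R ⁻¹' {r} ∩ A ⁻¹' {false} := rfl
  rw [this]
  exact (hR (measurableSet_singleton r)).inter (hA (measurableSet_singleton false))

lemma accmv_aux_I1 {Ω : Type*} [MeasurableSpace Ω] (μ : Measure Ω) [IsProbabilityMeasure μ]
    {p : ℕ} (R : Ω → Fin p → Bool) (A : Ω → Bool) (hR : Measurable R) (hA : Measurable A)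
    (r : Fin p → Bool) (I1 : Ω → ℝ)
    (hI1 : I1 = ({ω | (∀ i, r i = true → R ω i = true) ∧ A ω = true} : Set Ω).indicator
      fun _ => (1 : ℝ)) :
    Integrable I1 μ := by
  rw [hI1]
  refine (integrable_const (1:ℝ)).indicator ?_
  have : ({ω | (∀ i, r i = true → R ω i = true) ∧ A ω = true} : Set Ω)
      = (⋂ i, ⋂ _ : r i = true, (fun ω => R ω i) ⁻¹' {true}) ∩ A ⁻¹' {true} := by
    ext ω; simp [Set.mem_iInter]
  rw [this]
  exact (MeasurableSet.iInter fun i => MeasurableSet.iInter fun _ =>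
    ((measurable_pi_apply i).comp hR) (measurableSet_singleton true)).inter
    (hA (measurableSet_singleton true))

/-- **IPW identity under ACCMV (single primary variable).**
Under the ACCMV assumption in odds form (the conditional odds of the pattern
`(R = r, A = 0)` versus `(R ≥ r, A = 1)` given `(X_r, L)` equals `O_r(X_r)`),
for any integrable `f`,
`θ_{0,r} = E[f(L) I(R = r, A = 0)] = E[f(L) · O_r(X_r) · I(R ≥ r, A = 1)]`. -/
theorem accmv_ipw_identity_single
    {Ω : Type*} [MeasurableSpace Ω] (μ : Measure Ω) [IsProbabilityMeasure μ]
    {p : ℕ} (X : Ω → Fin p → ℝ) (L : Ω → ℝ) (R : Ω → Fin p → Bool) (A : Ω → Bool)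
    (hX : Measurable X) (hL : Measurable L) (hR : Measurable R) (hA : Measurable A)
    (r : Fin p → Bool)
    (f : ℝ → ℝ) (hf : Measurable f)
    (O : ({i : Fin p // r i = true} → ℝ) → ℝ) (hO : Measurable O)
    -- observed subvector `X_r`
    (Xr : Ω → {i : Fin p // r i = true} → ℝ) (hXr : Xr = fun ω i => X ω i.1)
    -- indicator of the missing pattern `R = r, A = 0`
    (I0 : Ω → ℝ)
    (hI0 : I0 = ({ω | R ω = r ∧ A ω = false} : Set Ω).indicator fun _ => (1 : ℝ))
    -- indicator of the available complete-case patterns `R ≥ r, A = 1`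
    (I1 : Ω → ℝ)
    (hI1 : I1 = ({ω | (∀ i, r i = true → R ω i = true) ∧ A ω = true} : Set Ω).indicator
      fun _ => (1 : ℝ))
    -- σ-algebra generated by `(X_r, L)`
    (m : MeasurableSpace Ω)
    (hm : m = MeasurableSpace.comap (fun ω => (Xr ω, L ω)) inferInstance)
    -- ACCMV in odds form: `P(R = r, A = 0 | X_r, L) = O_r(X_r) · P(R ≥ r, A = 1 | X_r, L)`
    (haccmv : μ[I0 | m] =ᵐ[μ] fun ω => O (Xr ω) * (μ[I1 | m]) ω)
    (hint0 : Integrable (fun ω => f (L ω) * I0 ω) μ)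
    (hint1 : Integrable (fun ω => f (L ω) * O (Xr ω) * I1 ω) μ) :
    ∫ ω, f (L ω) * I0 ω ∂μ = ∫ ω, f (L ω) * O (Xr ω) * I1 ω ∂μ := by
  subst hm
  have hm_le : MeasurableSpace.comap (fun ω => (Xr ω, L ω)) inferInstance ≤ ‹MeasurableSpace Ω› :=
    (accmv_aux_phi X L Xr hX hL hXr).comap_le
  have hφm : Measurable[MeasurableSpace.comap (fun ω => (Xr ω, L ω)) inferInstance] (fun ω => (Xr ω, L ω)) :=
    fun s hs => ⟨s, hs, rfl⟩
  have hLm : Measurable[MeasurableSpace.comap (fun ω => (Xr ω, L ω)) inferInstance] (fun ω => f (L ω)) :=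
    hf.comp (measurable_snd.comp hφm)
  have hOm : Measurable[MeasurableSpace.comap (fun ω => (Xr ω, L ω)) inferInstance] (fun ω => O (Xr ω)) :=
    hO.comp (measurable_fst.comp hφm)
  have hI0int : Integrable I0 μ := accmv_aux_I0 μ R A hR hA r I0 hI0
  have hI1int : Integrable I1 μ := accmv_aux_I1 μ R A hR hA r I1 hI1
  have key0 : μ[(fun ω => f (L ω)) * I0 | MeasurableSpace.comap (fun ω => (Xr ω, L ω)) inferInstance]
      =ᵐ[μ] (fun ω => f (L ω)) * μ[I0 | MeasurableSpace.comap (fun ω => (Xr ω, L ω)) inferInstance] :=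
    condExp_mul_of_stronglyMeasurable_left hLm.stronglyMeasurable hint0 hI0int
  have key1 : μ[(fun ω => f (L ω) * O (Xr ω)) * I1 | MeasurableSpace.comap (fun ω => (Xr ω, L ω)) inferInstance]
      =ᵐ[μ] (fun ω => f (L ω) * O (Xr ω)) * μ[I1 | MeasurableSpace.comap (fun ω => (Xr ω, L ω)) inferInstance] :=
    condExp_mul_of_stronglyMeasurable_left (hLm.mul hOm).stronglyMeasurable hint1 hI1int
  have hmid : μ[(fun ω => f (L ω)) * I0 | MeasurableSpace.comap (fun ω => (Xr ω, L ω)) inferInstance]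
      =ᵐ[μ] μ[(fun ω => f (L ω) * O (Xr ω)) * I1 | MeasurableSpace.comap (fun ω => (Xr ω, L ω)) inferInstance] := by
    refine key0.trans (Filter.EventuallyEq.trans ?_ key1.symm)
    filter_upwards [haccmv] with ω hω
    simp only [Pi.mul_apply, hω]
    ring
  calc ∫ ω, f (L ω) * I0 ω ∂μ
      = ∫ ω, (μ[(fun ω => f (L ω)) * I0 | MeasurableSpace.comap (fun ω => (Xr ω, L ω)) inferInstance]) ω ∂μ := (integral_condExp hm_le).symm
    _ = ∫ ω, (μ[(fun ω => f (L ω) * O (Xr ω)) * I1 | MeasurableSpace.comap (fun ω => (Xr ω, L ω)) inferInstance]) ω ∂μ := integral_congr_ae hmid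
    _ = ∫ ω, f (L ω) * O (Xr ω) * I1 ω ∂μ := integral_condExp hm_le
end

section
/- Under the ACCMV assumption, the full mean functional admits the weighted complete-case representation θ := E[f(L)] = E[ f(L) · I(A = 1) · (1 + Σ_r O_r(X_r) I(R ≥ r)) ], where the sum ranges over all patterns r ∈ {0,1}^p and O_r(x_r) = P(R = r, A = 0 | X_r = x_r)/P(R ≥ r, A = 1 | X_r = x_r). -/
open MeasureTheory Set

/-- **Weighted complete-case representation of `θ = E[f(L)]` under ACCMV
(single primary variable).**
If for every pattern `r ∈ {0,1}^p` the ACCMV odds assumption holds, i.e.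
`P(R = r, A = 0 | X_r, L) = O_r(X_r) · P(R ≥ r, A = 1 | X_r, L)`, then
`E[f(L)] = E[ f(L) · I(A = 1) · (1 + Σ_r O_r(X_r) I(R ≥ r)) ]`. -/
theorem accmv_weighted_complete_case_representation
    {Ω : Type*} [MeasurableSpace Ω] (μ : Measure Ω) [IsProbabilityMeasure μ]
    {p : ℕ} (X : Ω → Fin p → ℝ) (L : Ω → ℝ) (R : Ω → Fin p → Bool) (A : Ω → Bool)
    (hX : Measurable X) (hL : Measurable L) (hR : Measurable R) (hA : Measurable A)
    (f : ℝ → ℝ) (hf : Measurable f)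
    -- odds functions, one per pattern `r`
    (O : (r : Fin p → Bool) → (({i : Fin p // r i = true} → ℝ) → ℝ))
    (hO : ∀ r, Measurable (O r))
    -- observed subvectors
    (Xr : (r : Fin p → Bool) → Ω → ({i : Fin p // r i = true} → ℝ))
    (hXr : ∀ r, Xr r = fun ω i => X ω i.1)
    -- indicators of the events `R = r, A = 0` and `R ≥ r, A = 1`
    (I0 : (Fin p → Bool) → Ω → ℝ)
    (hI0 : ∀ r, I0 r = ({ω | R ω = r ∧ A ω = false} : Set Ω).indicator fun _ => (1 : ℝ))
    (I1 : (Fin p → Bool) → Ω → ℝ)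
    (hI1 : ∀ r, I1 r =
      ({ω | (∀ i, r i = true → R ω i = true) ∧ A ω = true} : Set Ω).indicator
        fun _ => (1 : ℝ))
    -- σ-algebras generated by `(X_r, L)`
    (m : (Fin p → Bool) → MeasurableSpace Ω)
    (hm : ∀ r, m r = MeasurableSpace.comap (fun ω => (Xr r ω, L ω)) inferInstance)
    -- ACCMV in odds form, for every pattern `r`
    (haccmv : ∀ r, μ[I0 r | m r] =ᵐ[μ] fun ω => O r (Xr r ω) * (μ[I1 r | m r]) ω)
    -- integrability
    (hintf : Integrable (fun ω => f (L ω)) μ)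
    (hint1 : ∀ r, Integrable (fun ω => f (L ω) * O r (Xr r ω) * I1 r ω) μ) :
    ∫ ω, f (L ω) ∂μ
      = ∫ ω, f (L ω) * (if A ω = true then (1 : ℝ) else 0)
          * (1 + ∑ r : Fin p → Bool,
              O r (Xr r ω) * (if ∀ i, r i = true → R ω i = true then (1 : ℝ) else 0)) ∂μ := by
  classical
  -- measurability of the subvector maps
  have hXrm : ∀ r, Measurable (Xr r) := by
    intro r; rw [hXr r]
    exact measurable_pi_lambda _ fun i => (measurable_pi_apply i.1).comp hX
  have hφ : ∀ r, Measurable (fun ω => (Xr r ω, L ω)) := fun r => (hXrm r).prodMk hL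
  have hmle : ∀ r, m r ≤ ‹MeasurableSpace Ω› := by
    intro r; rw [hm r]; exact (hφ r).comap_le
  -- measurable sets
  have hs0 : ∀ r, MeasurableSet {ω | R ω = r ∧ A ω = false} := by
    intro r
    exact (hR (measurableSet_singleton r)).inter (hA (measurableSet_singleton false))
  have hs1 : ∀ r : Fin p → Bool, MeasurableSet {ω | (∀ i, r i = true → R ω i = true) ∧ A ω = true} := by
    intro r
    refine MeasurableSet.inter ?_ (hA (measurableSet_singleton true))
    show MeasurableSet {ω | ∀ i : Fin p, r i = true → R ω i = true}
    have : {ω | ∀ i : Fin p, r i = true → R ω i = true}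
        = ⋂ i : Fin p, {ω | r i = true → R ω i = true} := by
      ext ω; simp
    rw [this]
    refine MeasurableSet.iInter fun i => ?_
    by_cases h : r i = true
    · simp only [h, true_implies]
      exact (measurable_pi_apply i).comp hR (measurableSet_singleton true)
    · simp [h]
  -- integrability of the pieces
  have hI0int : ∀ r, Integrable (I0 r) μ := by
    intro r; rw [hI0 r]; exact (integrable_const 1).indicator (hs0 r)
  have hI1int : ∀ r, Integrable (I1 r) μ := by
    intro r; rw [hI1 r]; exact (integrable_const 1).indicator (hs1 r)
  have hfI0 : ∀ r, Integrable (fun ω => f (L ω) * I0 r ω) μ := by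
    intro r
    have : (fun ω => f (L ω) * I0 r ω)
        = ({ω | R ω = r ∧ A ω = false} : Set Ω).indicator (fun ω => f (L ω)) := by
      funext ω; rw [hI0 r]
      by_cases h : ω ∈ ({ω | R ω = r ∧ A ω = false} : Set Ω) <;>
        simp [Set.indicator_apply, h]
    rw [this]; exact hintf.indicator (hs0 r)
  -- strongly measurable multipliers w.r.t. `m r`
  have hmeas_comp : ∀ r (g : (({i : Fin p // r i = true} → ℝ) × ℝ) → ℝ), Measurable g →
      Measurable[m r] (fun ω => g (Xr r ω, L ω)) := by
    intro r g hg
    rw [hm r]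
    exact hg.comp (Measurable.of_comap_le le_rfl)
  have hfLsm : ∀ r, StronglyMeasurable[m r] (fun ω => f (L ω)) :=
    fun r => (hmeas_comp r (fun q => f q.2) (hf.comp measurable_snd)).stronglyMeasurable
  have hfOsm : ∀ r, StronglyMeasurable[m r] (fun ω => f (L ω) * O r (Xr r ω)) :=
    fun r => (hmeas_comp r (fun q => f q.2 * O r q.1)
      ((hf.comp measurable_snd).mul ((hO r).comp measurable_fst))).stronglyMeasurable
  -- the key identity per pattern
  have key : ∀ r, ∫ ω, f (L ω) * I0 r ω ∂μ
      = ∫ ω, f (L ω) * O r (Xr r ω) * I1 r ω ∂μ := by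
    intro r
    haveI : SigmaFinite (μ.trim (hmle r)) := by
      exact sigmaFiniteTrim_mono _ le_rfl
    have h1 : ∫ ω, f (L ω) * I0 r ω ∂μ
        = ∫ ω, (μ[(fun ω => f (L ω) * I0 r ω) | m r]) ω ∂μ :=
      (integral_condExp (hmle r)).symm
    have h2 : μ[(fun ω => f (L ω) * I0 r ω) | m r]
        =ᵐ[μ] fun ω => f (L ω) * (μ[I0 r | m r]) ω :=
      condExp_mul_of_stronglyMeasurable_left (hfLsm r) (hfI0 r) (hI0int r)
    have h4 : μ[(fun ω => f (L ω) * O r (Xr r ω) * I1 r ω) | m r]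
        =ᵐ[μ] fun ω => (f (L ω) * O r (Xr r ω)) * (μ[I1 r | m r]) ω :=
      condExp_mul_of_stronglyMeasurable_left (hfOsm r) (hint1 r) (hI1int r)
    have h5 : ∫ ω, f (L ω) * O r (Xr r ω) * I1 r ω ∂μ
        = ∫ ω, (μ[(fun ω => f (L ω) * O r (Xr r ω) * I1 r ω) | m r]) ω ∂μ :=
      (integral_condExp (hmle r)).symm
    rw [h1, h5]
    refine integral_congr_ae ?_
    filter_upwards [h2, h4, haccmv r] with ω h2ω h4ω hacc
    rw [h2ω, h4ω, hacc]
    ring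
  -- pointwise decomposition of the LHS integrand
  have hdecomp : ∀ ω, f (L ω)
      = f (L ω) * (if A ω = true then (1 : ℝ) else 0) + ∑ r : Fin p → Bool, f (L ω) * I0 r ω := by
    intro ω
    cases hAω : A ω with
    | true =>
        have : ∀ r : Fin p → Bool, f (L ω) * I0 r ω = 0 := by
          intro r; rw [hI0 r]; simp [Set.indicator_apply, hAω]
        simp [hAω, Finset.sum_congr rfl fun r _ => this r]
    | false =>
        have : ∀ r : Fin p → Bool, f (L ω) * I0 r ω
            = if R ω = r then f (L ω) else 0 := by
          intro r; rw [hI0 r]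
          by_cases h : R ω = r <;> simp [Set.indicator_apply, h, hAω]
        rw [Finset.sum_congr rfl fun r _ => this r]
        simp [hAω, Finset.sum_ite_eq]
  -- pointwise decomposition of the RHS integrand
  have hrhs : ∀ ω, f (L ω) * (if A ω = true then (1 : ℝ) else 0)
          * (1 + ∑ r : Fin p → Bool,
              O r (Xr r ω) * (if ∀ i, r i = true → R ω i = true then (1 : ℝ) else 0))
      = f (L ω) * (if A ω = true then (1 : ℝ) else 0)
          + ∑ r : Fin p → Bool, f (L ω) * O r (Xr r ω) * I1 r ω := by
    intro ω
    cases hAω : A ω with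
    | true =>
        have : ∀ r : Fin p → Bool, f (L ω) * O r (Xr r ω) * I1 r ω
            = f (L ω) * (O r (Xr r ω)
                * (if ∀ i, r i = true → R ω i = true then (1 : ℝ) else 0)) := by
          intro r; rw [hI1 r]
          by_cases h : ∀ i, r i = true → R ω i = true <;>
            simp [Set.indicator_apply, h, hAω, mul_assoc]
        rw [Finset.sum_congr rfl fun r _ => this r, ← Finset.mul_sum]
        simp [hAω, mul_add]
    | false =>
        have : ∀ r : Fin p → Bool, f (L ω) * O r (Xr r ω) * I1 r ω = 0 := by
          intro r; rw [hI1 r]; simp [Set.indicator_apply, hAω]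
        simp [hAω, Finset.sum_congr rfl fun r _ => this r]
  -- integrability of the complete-case term
  have hIa : Integrable (fun ω => f (L ω) * (if A ω = true then (1 : ℝ) else 0)) μ := by
    have : (fun ω => f (L ω) * (if A ω = true then (1 : ℝ) else 0))
        = ({ω | A ω = true} : Set Ω).indicator (fun ω => f (L ω)) := by
      funext ω
      by_cases h : A ω = true <;> simp [Set.indicator_apply, h]
    rw [this]; exact hintf.indicator (hA (measurableSet_singleton true))
  -- put it all together
  calc ∫ ω, f (L ω) ∂μ
      = ∫ ω, (f (L ω) * (if A ω = true then (1 : ℝ) else 0)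
          + ∑ r : Fin p → Bool, f (L ω) * I0 r ω) ∂μ := by
        exact integral_congr_ae (Filter.Eventually.of_forall fun ω => hdecomp ω)
    _ = ∫ ω, f (L ω) * (if A ω = true then (1 : ℝ) else 0) ∂μ
          + ∑ r : Fin p → Bool, ∫ ω, f (L ω) * I0 r ω ∂μ := by
        rw [integral_add hIa (integrable_finset_sum _ fun r _ => hfI0 r),
          integral_finset_sum _ fun r _ => hfI0 r]
    _ = ∫ ω, f (L ω) * (if A ω = true then (1 : ℝ) else 0) ∂μ
          + ∑ r : Fin p → Bool, ∫ ω, f (L ω) * O r (Xr r ω) * I1 r ω ∂μ := by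
        rw [Finset.sum_congr rfl fun r _ => key r]
    _ = ∫ ω, (f (L ω) * (if A ω = true then (1 : ℝ) else 0)
          + ∑ r : Fin p → Bool, f (L ω) * O r (Xr r ω) * I1 r ω) ∂μ := by
        rw [integral_add hIa (integrable_finset_sum _ fun r _ => hint1 r),
          integral_finset_sum _ fun r _ => hint1 r]
    _ = _ := integral_congr_ae (Filter.Eventually.of_forall fun ω => (hrhs ω).symm)
end

section
/- The efficient-influence-function candidate has mean zero under ACCMV: with m_{r,0}(x_r) = E[f(L) | X_r = x_r, R ≥ r, A = 1] and O_r(x_r) = P(R = r, A = 0 | X_r = x_r)/P(R ≥ r, A = 1 | X_r = x_r), the random variable (f(L) − m_{r,0}(X_r)) O_r(X_r) I(R ≥ r, A = 1) + m_{r,0}(X_r) I(R = r, A = 0) − θ_{0,r} has expectation zero, where θ_{0,r} = E[f(L) I(R = r, A = 0)]. -/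
/-!
Conditioning on `(X_r, L)`, ACCMV in odds form says `E[I0 | X_r, L] = O(X_r) E[I1 | X_r, L]`.
Hence every `(X_r, L)`-measurable `g` satisfies `E[g I0] = E[g O I1]`. Taking `g = f(L)` and
`g = m(X_r)` gives `E[(f(L) - m) O I1] = θ - E[m I0]`, so the influence function has mean zero.
-/

open MeasureTheory

section OddsWeighting

variable {Ω : Type*} {m m₀ : MeasurableSpace Ω} {μ : Measure Ω} [IsFiniteMeasure μ]

theorem integral_mul_eq_integral_mul_odds_mul (hm : m ≤ m₀) {I₀ I₁ O g : Ω → ℝ}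
    (hI₀ : Integrable I₀ μ) (hI₁ : Integrable I₁ μ)
    (hO : StronglyMeasurable[m] O) (hodds : μ[I₀ | m] =ᵐ[μ] fun ω => O ω * μ[I₁ | m] ω)
    (hg : StronglyMeasurable[m] g)
    (hgI₀ : Integrable (fun ω => g ω * I₀ ω) μ)
    (hgOI₁ : Integrable (fun ω => g ω * O ω * I₁ ω) μ) :
    ∫ ω, g ω * I₀ ω ∂μ = ∫ ω, g ω * O ω * I₁ ω ∂μ := by
  have hpull₀ : μ[fun ω => g ω * I₀ ω | m] =ᵐ[μ] fun ω => g ω * μ[I₀ | m] ω :=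
    condExp_mul_of_stronglyMeasurable_left hg hgI₀ hI₀
  have hpull₁ : μ[fun ω => g ω * O ω * I₁ ω | m] =ᵐ[μ] fun ω => g ω * O ω * μ[I₁ | m] ω :=
    condExp_mul_of_stronglyMeasurable_left (hg.mul hO) hgOI₁ hI₁
  calc ∫ ω, g ω * I₀ ω ∂μ = ∫ ω, μ[fun ω => g ω * I₀ ω | m] ω ∂μ := (integral_condExp hm).symm
    _ = ∫ ω, μ[fun ω => g ω * O ω * I₁ ω | m] ω ∂μ := by
      refine integral_congr_ae (hpull₀.trans (.trans ?_ hpull₁.symm))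
      filter_upwards [hodds] with ω hω
      rw [hω, mul_assoc]
    _ = ∫ ω, g ω * O ω * I₁ ω ∂μ := integral_condExp hm

theorem integral_residual_mul_odds_mul_add_eq (hm : m ≤ m₀) {I₀ I₁ O F M : Ω → ℝ}
    (hI₀ : Integrable I₀ μ) (hI₁ : Integrable I₁ μ)
    (hO : StronglyMeasurable[m] O) (hodds : μ[I₀ | m] =ᵐ[μ] fun ω => O ω * μ[I₁ | m] ω)
    (hF : StronglyMeasurable[m] F) (hM : StronglyMeasurable[m] M)
    (hFI₀ : Integrable (fun ω => F ω * I₀ ω) μ)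
    (hFOI₁ : Integrable (fun ω => F ω * O ω * I₁ ω) μ)
    (hMOI₁ : Integrable (fun ω => M ω * O ω * I₁ ω) μ)
    (hMI₀ : Integrable (fun ω => M ω * I₀ ω) μ) :
    ∫ ω, ((F ω - M ω) * O ω * I₁ ω + M ω * I₀ ω) ∂μ = ∫ ω, F ω * I₀ ω ∂μ := by
  have hF_eq := integral_mul_eq_integral_mul_odds_mul hm hI₀ hI₁ hO hodds hF hFI₀ hFOI₁
  have hM_eq := integral_mul_eq_integral_mul_odds_mul hm hI₀ hI₁ hO hodds hM hMI₀ hMOI₁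
  calc ∫ ω, ((F ω - M ω) * O ω * I₁ ω + M ω * I₀ ω) ∂μ
      = ∫ ω, (F ω * O ω * I₁ ω - M ω * O ω * I₁ ω + M ω * I₀ ω) ∂μ := by
        simp only [sub_mul]
    _ = ∫ ω, F ω * I₀ ω ∂μ := by
        rw [integral_add (f := fun ω => F ω * O ω * I₁ ω - M ω * O ω * I₁ ω) (hFOI₁.sub hMOI₁)
          hMI₀, integral_sub hFOI₁ hMOI₁, hF_eq, hM_eq]
        ring

end OddsWeighting

/-- **The efficient influence function candidate has mean zero under ACCMV
(single primary variable, Theorem 3).**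
With the true outcome regression `m_{r,0}(x_r) = E[f(L) | X_r = x_r, R ≥ r, A = 1]`
and the true odds `O_r(x_r) = P(R = r, A = 0 | X_r)/P(R ≥ r, A = 1 | X_r)`
(ACCMV in odds form), the random variable
`(f(L) − m_{r,0}(X_r)) O_r(X_r) I(R ≥ r, A = 1) + m_{r,0}(X_r) I(R = r, A = 0) − θ_{0,r}`
has expectation zero, where `θ_{0,r} = E[f(L) I(R = r, A = 0)]`. -/
theorem accmv_eif_mean_zero_single
    {Ω : Type*} [MeasurableSpace Ω] (μ : Measure Ω) [IsProbabilityMeasure μ]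
    {p : ℕ} (X : Ω → Fin p → ℝ) (L : Ω → ℝ) (R : Ω → Fin p → Bool) (A : Ω → Bool)
    (hX : Measurable X) (hL : Measurable L) (hR : Measurable R) (hA : Measurable A)
    (r : Fin p → Bool)
    (f : ℝ → ℝ) (hf : Measurable f)
    (O : ({i : Fin p // r i = true} → ℝ) → ℝ) (hO : Measurable O)
    (M : ({i : Fin p // r i = true} → ℝ) → ℝ) (hM : Measurable M)
    -- observed subvector
    (Xr : Ω → {i : Fin p // r i = true} → ℝ) (hXr : Xr = fun ω i => X ω i.1)
    -- indicators
    (I0 : Ω → ℝ)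
    (hI0 : I0 = ({ω | R ω = r ∧ A ω = false} : Set Ω).indicator fun _ => (1 : ℝ))
    (I1 : Ω → ℝ)
    (hI1 : I1 = ({ω | (∀ i, r i = true → R ω i = true) ∧ A ω = true} : Set Ω).indicator
      fun _ => (1 : ℝ))
    -- σ-algebras generated by `(X_r, L)` and by `X_r`
    (mXL : MeasurableSpace Ω)
    (hmXL : mXL = MeasurableSpace.comap (fun ω => (Xr ω, L ω)) inferInstance)
    (mXr : MeasurableSpace Ω)
    (hmXr : mXr = MeasurableSpace.comap Xr inferInstance)
    -- ACCMV in odds form with the true odds `O = O_r`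
    (haccmv : μ[I0 | mXL] =ᵐ[μ] fun ω => O (Xr ω) * (μ[I1 | mXL]) ω)
    -- `M = m_{r,0}` is the true outcome regression
    (hMdef : (fun ω => M (Xr ω) * (μ[I1 | mXr]) ω)
      =ᵐ[μ] μ[fun ω => f (L ω) * I1 ω | mXr])
    -- the target parameter θ_{0,r}
    (θ : ℝ) (hθ : θ = ∫ ω, f (L ω) * I0 ω ∂μ)
    -- integrability
    (hint0 : Integrable (fun ω => f (L ω) * I0 ω) μ)
    (hintEIF : Integrable (fun ω =>
      (f (L ω) - M (Xr ω)) * O (Xr ω) * I1 ω + M (Xr ω) * I0 ω - θ) μ)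
    (hint1 : Integrable (fun ω => f (L ω) * O (Xr ω) * I1 ω) μ)
    (hint2 : Integrable (fun ω => M (Xr ω) * O (Xr ω) * I1 ω) μ)
    (hint3 : Integrable (fun ω => M (Xr ω) * I0 ω) μ) :
    ∫ ω, ((f (L ω) - M (Xr ω)) * O (Xr ω) * I1 ω + M (Xr ω) * I0 ω - θ) ∂μ = 0 := by
  have hφ : Measurable[mXL] fun ω => (Xr ω, L ω) := hmXL ▸ comap_measurable _
  -- the binder `mXr` is the innermost `MeasurableSpace Ω` instance, so the ambient one is named
  rename_i mΩ _
  have hmXL_le : mXL ≤ mΩ := by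
    rw [hmXL, hXr]
    exact ((measurable_pi_lambda _ fun i : {i // r i = true} => measurable_pi_apply i.1).comp
      hX |>.prodMk hL).comap_le
  have hI0_int : Integrable I0 μ := hI0 ▸ (integrable_const 1).indicator
    ((hR (measurableSet_singleton r)).inter (hA (measurableSet_singleton false)))
  have hI1_int : Integrable I1 μ := hI1 ▸ (integrable_const 1).indicator
    ((hR (Set.toFinite {v : Fin p → Bool | ∀ i, r i = true → v i = true}).measurableSet).inter
      (hA (measurableSet_singleton true)))
  have hmain := integral_residual_mul_odds_mul_add_eq (O := fun ω => O (Xr ω))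
    (F := fun ω => f (L ω)) (M := fun ω => M (Xr ω)) hmXL_le hI0_int hI1_int
    ((hO.comp measurable_fst).comp hφ).stronglyMeasurable haccmv
    ((hf.comp measurable_snd).comp hφ).stronglyMeasurable
    ((hM.comp measurable_fst).comp hφ).stronglyMeasurable hint0 hint1 hint2 hint3
  have hEIF_int :=
    (hintEIF.add (integrable_const θ)).congr (.of_forall fun ω => sub_add_cancel _ θ)
  rw [integral_sub hEIF_int (integrable_const θ), hmain, integral_const, probReal_univ, one_smul,
    hθ, sub_self]
end

section
/- Multivariate ACCMV IPW identity: under the multivariate ACCMV odds assumption, for any integrable f : ℝ^d → ℝ and any r and a ≠ 1_d, E[ f(L) I(R = r, A = a) ] = E[ f(L) O_{r,a}(X_r, L_a) I(R ≥ r, A = 1_d) ], where O_{r,a}(x_r, ℓ_a) = P(R = r, A = a | x_r, ℓ_a)/P(R ≥ r, A = 1_d | x_r, ℓ_a). -/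
open MeasureTheory Set

/-- **Multivariate ACCMV IPW identity.**
For primary variables `L ∈ ℝ^d` with pattern `A ∈ {0,1}^d`, auxiliary variables
`X ∈ ℝ^p` with pattern `R ∈ {0,1}^p`, and patterns `r`, `a ≠ 1_d`, suppose the
multivariate ACCMV odds assumption holds:
`P(R = r, A = a | X_r, L) = O_{r,a}(X_r, L_a) · P(R ≥ r, A = 1_d | X_r, L)`.
Then for any integrable `f : ℝ^d → ℝ`,
`E[f(L) I(R = r, A = a)] = E[f(L) O_{r,a}(X_r, L_a) I(R ≥ r, A = 1_d)]`. -/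
theorem accmv_ipw_identity_multivariate
    {Ω : Type*} [MeasurableSpace Ω] (μ : Measure Ω) [IsProbabilityMeasure μ]
    {p d : ℕ} (X : Ω → Fin p → ℝ) (L : Ω → Fin d → ℝ)
    (R : Ω → Fin p → Bool) (A : Ω → Fin d → Bool)
    (hX : Measurable X) (hL : Measurable L) (hR : Measurable R) (hA : Measurable A)
    (r : Fin p → Bool) (a : Fin d → Bool) (ha : a ≠ fun _ => true)
    (f : (Fin d → ℝ) → ℝ) (hf : Measurable f)
    (O : ({i : Fin p // r i = true} → ℝ) → ({j : Fin d // a j = true} → ℝ) → ℝ)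
    (hO : Measurable (Function.uncurry O))
    -- observed subvectors `X_r` and `L_a`
    (Xr : Ω → {i : Fin p // r i = true} → ℝ) (hXr : Xr = fun ω i => X ω i.1)
    (La : Ω → {j : Fin d // a j = true} → ℝ) (hLa : La = fun ω j => L ω j.1)
    -- indicator of the missing pattern `R = r, A = a`
    (I0 : Ω → ℝ)
    (hI0 : I0 = ({ω | R ω = r ∧ A ω = a} : Set Ω).indicator fun _ => (1 : ℝ))
    -- indicator of the available complete-case patterns `R ≥ r, A = 1_d`
    (I1 : Ω → ℝ)
    (hI1 : I1 = ({ω | (∀ i, r i = true → R ω i = true) ∧ A ω = fun _ => true} :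
      Set Ω).indicator fun _ => (1 : ℝ))
    -- σ-algebra generated by `(X_r, L)`
    (m : MeasurableSpace Ω)
    (hm : m = MeasurableSpace.comap (fun ω => (Xr ω, L ω)) inferInstance)
    -- multivariate ACCMV in odds form
    (haccmv : μ[I0 | m] =ᵐ[μ] fun ω => O (Xr ω) (La ω) * (μ[I1 | m]) ω)
    (hint0 : Integrable (fun ω => f (L ω) * I0 ω) μ)
    (hint1 : Integrable (fun ω => f (L ω) * O (Xr ω) (La ω) * I1 ω) μ) :
    ∫ ω, f (L ω) * I0 ω ∂μ = ∫ ω, f (L ω) * O (Xr ω) (La ω) * I1 ω ∂μ := by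
  subst hm
  have hXr' : Measurable Xr := by
    subst hXr; exact measurable_pi_lambda _ fun i => (measurable_pi_apply i.1).comp hX
  have hle : MeasurableSpace.comap (fun ω => (Xr ω, L ω)) inferInstance ≤
      ‹MeasurableSpace Ω› := (hXr'.prodMk hL).comap_le
  have hforall : MeasurableSet {ω | ∀ i, r i = true → R ω i = true} := by
    rw [Set.setOf_forall]
    refine MeasurableSet.iInter fun i => ?_
    by_cases hri : r i = true
    · simp only [hri, forall_true_left]
      exact ((measurable_pi_apply i).comp hR) (measurableSet_singleton true)
    · simp [hri]
  have hs1 : MeasurableSet {ω | (∀ i, r i = true → R ω i = true) ∧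
      A ω = fun _ => true} :=
    hforall.inter (hA (measurableSet_singleton (fun _ => true)))
  have hs0 : MeasurableSet {ω | R ω = r ∧ A ω = a} :=
    (hR (measurableSet_singleton r)).inter (hA (measurableSet_singleton a))
  have hI0int : Integrable I0 μ := by
    rw [hI0]; exact (integrable_const (1 : ℝ)).indicator hs0
  have hI1int : Integrable I1 μ := by
    rw [hI1]; exact (integrable_const (1 : ℝ)).indicator hs1
  set m := MeasurableSpace.comap (fun ω => (Xr ω, L ω)) inferInstance with hm
  haveI : SigmaFinite (μ.trim hle) := by
    haveI : IsFiniteMeasure (μ.trim hle) := isFiniteMeasure_trim hle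
    infer_instance
  have hpair : Measurable[m] (fun ω => (Xr ω, L ω)) := Measurable.of_comap_le le_rfl
  have hLm : Measurable[m] L := measurable_snd.comp hpair
  have hXrm : Measurable[m] Xr := measurable_fst.comp hpair
  have hLam : Measurable[m] La := by
    subst hLa
    exact measurable_pi_lambda _ fun j => (measurable_pi_apply j.1).comp hLm
  have hg0 : StronglyMeasurable[m] (fun ω => f (L ω)) := (hf.comp hLm).stronglyMeasurable
  have hg1 : StronglyMeasurable[m] (fun ω => f (L ω) * O (Xr ω) (La ω)) :=
    ((hf.comp hLm).mul (hO.comp (hXrm.prodMk hLam))).stronglyMeasurable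
  have h0 : μ[(fun ω => f (L ω)) * I0 | m] =ᵐ[μ] (fun ω => f (L ω)) * μ[I0 | m] :=
    condExp_mul_of_stronglyMeasurable_left hg0 hint0 hI0int
  have h1 : μ[(fun ω => f (L ω) * O (Xr ω) (La ω)) * I1 | m]
      =ᵐ[μ] (fun ω => f (L ω) * O (Xr ω) (La ω)) * μ[I1 | m] :=
    condExp_mul_of_stronglyMeasurable_left hg1 hint1 hI1int
  calc ∫ ω, f (L ω) * I0 ω ∂μ
      = ∫ ω, (μ[(fun ω => f (L ω)) * I0 | m]) ω ∂μ := (integral_condExp hle).symm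
    _ = ∫ ω, f (L ω) * O (Xr ω) (La ω) * (μ[I1 | m]) ω ∂μ := by
        refine integral_congr_ae (h0.trans ?_)
        filter_upwards [haccmv] with ω hω
        simp only [Pi.mul_apply, hω, mul_assoc]
    _ = ∫ ω, (μ[(fun ω => f (L ω) * O (Xr ω) (La ω)) * I1 | m]) ω ∂μ := by
        refine (integral_congr_ae (h1.trans ?_)).symm
        filter_upwards with ω
        simp [mul_assoc]
    _ = ∫ ω, f (L ω) * O (Xr ω) (La ω) * I1 ω ∂μ := integral_condExp hle
end

section
/- Weight aggregation identity: with Q_r(X_r, L) := Σ_{τ ≤ r} Σ_{a ≠ 1_d} O_{τ,a}(X_τ, L_a), one has the pointwise equality Σ_{r, a ≠ 1_d} O_{r,a}(X_r, L_a) I(A = 1_d, R ≥ r) = Σ_r Q_r(X_r, L) I(R = r, A = 1_d), and consequently under multivariate ACCMV, E[f(L)] = E[ f(L) I(A = 1_d) Σ_r (1 + Q_r(X_r, L)) I(R = r) ]. -/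
open MeasureTheory Set

theorem accmv_aux {Ω : Type*} [m0 : MeasurableSpace Ω] (μ : Measure Ω) [IsProbabilityMeasure μ]
    {m' : MeasurableSpace Ω} (hm' : m' ≤ m0)
    (g o i0 i1 : Ω → ℝ)
    (hg : StronglyMeasurable[m'] g)
    (hae : μ[i0|m'] =ᵐ[μ] fun ω => o ω * (μ[i1|m']) ω)
    (hi1nn : ∀ ω, 0 ≤ i1 ω) (hi1int : Integrable i1 μ) (hi0int : Integrable i0 μ)
    (hgi0 : Integrable (fun ω => g ω * i0 ω) μ)
    (hgoi1 : Integrable (fun ω => g ω * o ω * i1 ω) μ) :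
    ∫ ω, g ω * i0 ω ∂μ = ∫ ω, g ω * o ω * i1 ω ∂μ := by
  haveI : SigmaFinite (μ.trim hm') := inferInstance
  set E0 : Ω → ℝ := μ[i0|m'] with hE0
  set E1 : Ω → ℝ := μ[i1|m'] with hE1
  have hE0m : Measurable[m'] E0 := stronglyMeasurable_condExp.measurable
  have hE1m : Measurable[m'] E1 := stronglyMeasurable_condExp.measurable
  set O' : Ω → ℝ := fun ω => if E1 ω = 0 then 0 else E0 ω / E1 ω with hO'
  have hO'm : Measurable[m'] O' := by
    exact Measurable.ite (hE1m (measurableSet_singleton 0)) measurable_const (hE0m.div hE1m)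
  have hS : MeasurableSet[m'] {ω | E1 ω = 0} := hE1m (measurableSet_singleton 0)
  have hS0 : MeasurableSet[m0] {ω | E1 ω = 0} := hm' _ hS
  have hi1S : ∫ ω in {ω | E1 ω = 0}, i1 ω ∂μ = 0 := by
    rw [← setIntegral_condExp hm' hi1int hS]
    refine @setIntegral_eq_zero_of_forall_eq_zero Ω ℝ m0 _ _ _ _ _ (fun x hx => hx)
  have hi1zero : ∀ᵐ ω ∂(μ.restrict {ω | E1 ω = 0}), i1 ω = 0 := by
    have := (@setIntegral_eq_zero_iff_of_nonneg_ae Ω m0 _ _ _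
      (Filter.Eventually.of_forall fun ω => hi1nn ω : 0 ≤ᵐ[μ.restrict {ω | E1 ω = 0}] i1)
      (hi1int.restrict)).mp hi1S
    filter_upwards [this] with ω hω using hω
  have h1 : ∀ᵐ ω ∂μ, ω ∈ {ω | E1 ω = 0} → i1 ω = 0 :=
    (ae_restrict_iff' hS0).mp hi1zero
  have h2 : ∀ᵐ ω ∂μ, E0 ω = o ω * E1 ω := hae
  have eqA : (fun ω => g ω * o ω * i1 ω) =ᵐ[μ] fun ω => g ω * O' ω * i1 ω := by
    filter_upwards [h1, h2] with ω h1ω h2ω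
    by_cases hi : i1 ω = 0
    · simp [hi]
    · have hE1ne : E1 ω ≠ 0 := fun h => hi (h1ω h)
      have : O' ω = o ω := by
        simp only [hO', if_neg hE1ne, h2ω]
        field_simp
      rw [this]
  have eqB : (fun ω => g ω * (o ω * E1 ω)) =ᵐ[μ] fun ω => g ω * O' ω * E1 ω := by
    filter_upwards [h2] with ω h2ω
    by_cases hE1ne : E1 ω = 0
    · simp [hE1ne]
    · have : O' ω = o ω := by
        simp only [hO', if_neg hE1ne, h2ω]
        field_simp
      rw [this]; ring
  have hgO' : StronglyMeasurable[m'] (fun ω => g ω * O' ω) :=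
    hg.mul hO'm.stronglyMeasurable
  have hgO'i1int : Integrable (fun ω => g ω * O' ω * i1 ω) μ := hgoi1.congr eqA
  calc ∫ ω, g ω * i0 ω ∂μ
      = ∫ ω, (μ[fun ω => g ω * i0 ω|m']) ω ∂μ := (integral_condExp hm').symm
    _ = ∫ ω, g ω * E0 ω ∂μ := by
        refine integral_congr_ae ?_
        have := condExp_mul_of_stronglyMeasurable_left hg (μ := μ) (g := i0) hgi0 hi0int
        filter_upwards [this] with ω hω using hω
    _ = ∫ ω, g ω * (o ω * E1 ω) ∂μ := by
        refine integral_congr_ae ?_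
        filter_upwards [h2] with ω hω
        rw [hω]
    _ = ∫ ω, g ω * O' ω * E1 ω ∂μ := integral_congr_ae eqB
    _ = ∫ ω, (μ[fun ω => (g ω * O' ω) * i1 ω|m']) ω ∂μ := by
        refine integral_congr_ae ?_
        have := condExp_mul_of_stronglyMeasurable_left hgO' (μ := μ) (g := i1) hgO'i1int hi1int
        filter_upwards [this] with ω hω
        exact hω.symm
    _ = ∫ ω, g ω * O' ω * i1 ω ∂μ := integral_condExp hm'
    _ = ∫ ω, g ω * o ω * i1 ω ∂μ := (integral_congr_ae eqA).symm

/-- **Weight aggregation identity and IPW representation (multivariate ACCMV).**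
With `Q_r(X_r, L) = Σ_{τ ≤ r} Σ_{a ≠ 1_d} O_{τ,a}(X_τ, L_a)`, one has the pointwise
equality
`Σ_{r, a ≠ 1_d} O_{r,a}(X_r, L_a) I(A = 1_d, R ≥ r) = Σ_r Q_r(X_r, L) I(R = r, A = 1_d)`,
and consequently, under the multivariate ACCMV odds assumption,
`E[f(L)] = E[f(L) I(A = 1_d) Σ_r (1 + Q_r(X_r, L)) I(R = r)]`. -/
theorem accmv_weight_aggregation
    {Ω : Type*} [MeasurableSpace Ω] (μ : Measure Ω) [IsProbabilityMeasure μ]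
    {p d : ℕ} (X : Ω → Fin p → ℝ) (L : Ω → Fin d → ℝ)
    (R : Ω → Fin p → Bool) (A : Ω → Fin d → Bool)
    (hX : Measurable X) (hL : Measurable L) (hR : Measurable R) (hA : Measurable A)
    (f : (Fin d → ℝ) → ℝ) (hf : Measurable f)
    -- odds functions, one per pair of patterns `(r, a)`
    (O : (r : Fin p → Bool) → (a : Fin d → Bool) →
      ({i : Fin p // r i = true} → ℝ) → ({j : Fin d // a j = true} → ℝ) → ℝ)
    -- observed subvectors
    (Xr : (r : Fin p → Bool) → Ω → ({i : Fin p // r i = true} → ℝ))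
    (hXr : ∀ r, Xr r = fun ω i => X ω i.1)
    (La : (a : Fin d → Bool) → Ω → ({j : Fin d // a j = true} → ℝ))
    (hLa : ∀ a, La a = fun ω j => L ω j.1)
    -- indicators
    (I0 : (Fin p → Bool) → (Fin d → Bool) → Ω → ℝ)
    (hI0 : ∀ r a, I0 r a =
      ({ω | R ω = r ∧ A ω = a} : Set Ω).indicator fun _ => (1 : ℝ))
    (I1 : (Fin p → Bool) → Ω → ℝ)
    (hI1 : ∀ r, I1 r = ({ω | (∀ i, r i = true → R ω i = true) ∧ A ω = fun _ => true} :
      Set Ω).indicator fun _ => (1 : ℝ))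
    -- total weights `Q_r`
    (Q : (Fin p → Bool) → Ω → ℝ)
    (hQ : ∀ r ω, Q r ω =
      ∑ τ ∈ Finset.univ.filter (fun τ : Fin p → Bool => ∀ i, τ i = true → r i = true),
        ∑ b ∈ Finset.univ.filter (fun b : Fin d → Bool => b ≠ fun _ => true),
          O τ b (Xr τ ω) (La b ω))
    -- σ-algebras generated by `(X_r, L)`
    (m : (Fin p → Bool) → MeasurableSpace Ω)
    (hm : ∀ r, m r = MeasurableSpace.comap (fun ω => (Xr r ω, L ω)) inferInstance)
    -- multivariate ACCMV in odds form for every `r` and every `a ≠ 1_d`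
    (haccmv : ∀ r (a : Fin d → Bool), a ≠ (fun _ => true) →
      μ[I0 r a | m r] =ᵐ[μ] fun ω => O r a (Xr r ω) (La a ω) * (μ[I1 r | m r]) ω)
    -- integrability
    (hintf : Integrable (fun ω => f (L ω)) μ)
    (hint1 : ∀ r (a : Fin d → Bool), a ≠ (fun _ => true) →
      Integrable (fun ω => f (L ω) * O r a (Xr r ω) (La a ω) * I1 r ω) μ) :
    (∀ ω, (∑ r : Fin p → Bool,
        ∑ b ∈ Finset.univ.filter (fun b : Fin d → Bool => b ≠ fun _ => true),
          O r b (Xr r ω) (La b ω) * I1 r ω)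
      = ∑ r : Fin p → Bool,
          Q r ω * (if (R ω = r ∧ A ω = fun _ => true) then (1 : ℝ) else 0))
    ∧ ∫ ω, f (L ω) ∂μ
        = ∫ ω, f (L ω) * (if A ω = (fun _ => true) then (1 : ℝ) else 0)
            * ∑ r : Fin p → Bool,
                (1 + Q r ω) * (if R ω = r then (1 : ℝ) else 0) ∂μ := by
  -- Part 1: pointwise weight aggregation identity
  have hpart1 : ∀ ω, (∑ r : Fin p → Bool,
        ∑ b ∈ Finset.univ.filter (fun b : Fin d → Bool => b ≠ fun _ => true),
          O r b (Xr r ω) (La b ω) * I1 r ω)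
      = ∑ r : Fin p → Bool,
          Q r ω * (if (R ω = r ∧ A ω = fun _ => true) then (1 : ℝ) else 0) := by
    intro ω
    simp only [hI1, Set.indicator_apply, Set.mem_setOf_eq]
    by_cases hAω : A ω = fun _ => true
    · simp only [hAω, and_true]
      have hrhs : (∑ r : Fin p → Bool, Q r ω * (if R ω = r then (1:ℝ) else 0))
          = Q (R ω) ω := by
        rw [Finset.sum_eq_single (R ω)]
        · simp
        · intro b _ hb; simp [Ne.symm hb]
        · simp
      rw [hrhs, hQ, Finset.sum_filter]
      refine Finset.sum_congr rfl fun r _ => ?_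
      by_cases h : ∀ i, r i = true → R ω i = true <;> simp [h, Finset.mul_sum]
    · simp [hAω]
  refine ⟨hpart1, ?_⟩
  -- measurability facts
  have hXrm : ∀ r, Measurable (Xr r) := by
    intro r; rw [hXr]
    exact measurable_pi_lambda _ fun i => (measurable_pi_apply i.1).comp hX
  have hpair : ∀ r, Measurable (fun ω => (Xr r ω, L ω)) := fun r => (hXrm r).prodMk hL
  have hmle : ∀ r, m r ≤ ‹MeasurableSpace Ω› := by
    intro r; rw [hm]; exact (hpair r).comap_le
  have hgsm : ∀ r, StronglyMeasurable[m r] (fun ω => f (L ω)) := by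
    intro r
    have hpm : Measurable[m r] (fun ω => (Xr r ω, L ω)) := by
      rw [hm]; exact measurable_iff_comap_le.mpr le_rfl
    exact ((hf.comp (measurable_snd.comp hpm))).stronglyMeasurable
  have hsRA : ∀ r a, MeasurableSet {ω | R ω = r ∧ A ω = a} := by
    intro r a
    exact (hR (measurableSet_singleton r)).inter (hA (measurableSet_singleton a))
  have hs1 : ∀ r : Fin p → Bool, MeasurableSet
      {ω | (∀ i, r i = true → R ω i = true) ∧ A ω = fun _ => true} := by
    intro r
    exact (hR (Set.toFinite {v : Fin p → Bool | ∀ i, r i = true → v i = true}).measurableSet).inter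
      (hA (measurableSet_singleton _))
  have hI0int : ∀ r a, Integrable (I0 r a) μ := by
    intro r a; rw [hI0]; exact (integrable_const 1).indicator (hsRA r a)
  have hI1int : ∀ r, Integrable (I1 r) μ := by
    intro r; rw [hI1]; exact (integrable_const 1).indicator (hs1 r)
  have hI1nn : ∀ r ω, 0 ≤ I1 r ω := by
    intro r ω; rw [hI1]
    exact Set.indicator_apply_nonneg fun _ => zero_le_one
  have hfI0int : ∀ r a, Integrable (fun ω => f (L ω) * I0 r a ω) μ := by
    intro r a
    have : (fun ω => f (L ω) * I0 r a ω)
        = ({ω | R ω = r ∧ A ω = a} : Set Ω).indicator (fun ω => f (L ω)) := by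
      funext ω
      rw [hI0]
      by_cases h : ω ∈ ({ω | R ω = r ∧ A ω = a} : Set Ω) <;>
        simp [Set.indicator_apply, h]
    rw [this]
    exact hintf.indicator (hsRA r a)
  -- the key conditional-expectation step
  have hkey : ∀ r (a : Fin d → Bool), a ≠ (fun _ => true) →
      ∫ ω, f (L ω) * I0 r a ω ∂μ
        = ∫ ω, f (L ω) * O r a (Xr r ω) (La a ω) * I1 r ω ∂μ :=
    fun r a ha => accmv_aux μ (hmle r) (fun ω => f (L ω))
      (fun ω => O r a (Xr r ω) (La a ω)) (I0 r a) (I1 r) (hgsm r) (haccmv r a ha)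
      (hI1nn r) (hI1int r) (hI0int r a) (hfI0int r a) (hint1 r a ha)
  -- sum of all indicators is 1
  have hone : ∀ ω, (∑ r : Fin p → Bool, ∑ a : Fin d → Bool, I0 r a ω) = 1 := by
    intro ω
    simp only [hI0, Set.indicator_apply, Set.mem_setOf_eq]
    have inner : ∀ r : Fin p → Bool,
        (∑ a : Fin d → Bool, if (R ω = r ∧ A ω = a) then (1:ℝ) else 0)
          = if R ω = r then 1 else 0 := by
      intro r
      by_cases h : R ω = r <;> simp [h, Finset.sum_ite_eq]
    rw [Finset.sum_congr rfl fun r _ => inner r]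
    simp [Finset.sum_ite_eq]
  -- splitting off the complete-case pattern
  have hsplit : ∀ (F : (Fin d → Bool) → ℝ), (∑ a, F a)
      = F (fun _ => true) + ∑ a ∈ Finset.univ.filter
          (fun b : Fin d → Bool => b ≠ fun _ => true), F a := by
    intro F
    have : Finset.univ.filter (fun b : Fin d → Bool => b ≠ fun _ => true)
        = Finset.univ.erase (fun _ => true) := by
      ext b; simp [Finset.mem_filter, Finset.mem_erase, and_comm]
    rw [this, ← Finset.add_sum_erase Finset.univ F (Finset.mem_univ _)]
  -- LHS decomposition
  have lhs_eq : ∫ ω, f (L ω) ∂μ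
      = (∑ r : Fin p → Bool, ∫ ω, f (L ω) * I0 r (fun _ => true) ω ∂μ)
        + ∑ r : Fin p → Bool, ∑ a ∈ Finset.univ.filter
            (fun b : Fin d → Bool => b ≠ fun _ => true),
            ∫ ω, f (L ω) * O r a (Xr r ω) (La a ω) * I1 r ω ∂μ := by
    have step1 : (fun ω => f (L ω))
        = fun ω => ∑ r : Fin p → Bool, ∑ a : Fin d → Bool, f (L ω) * I0 r a ω := by
      funext ω
      simp_rw [← Finset.mul_sum]
      rw [hone, mul_one]
    calc ∫ ω, f (L ω) ∂μ
        = ∫ ω, ∑ r : Fin p → Bool, ∑ a : Fin d → Bool, f (L ω) * I0 r a ω ∂μ := by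
          rw [← step1]
      _ = ∑ r : Fin p → Bool, ∑ a : Fin d → Bool, ∫ ω, f (L ω) * I0 r a ω ∂μ := by
          rw [integral_finset_sum _ fun r _ =>
            integrable_finset_sum _ fun a _ => hfI0int r a]
          exact Finset.sum_congr rfl fun r _ =>
            integral_finset_sum _ fun a _ => hfI0int r a
      _ = _ := by
          rw [← Finset.sum_add_distrib]
          refine Finset.sum_congr rfl fun r _ => ?_
          rw [hsplit fun a => ∫ ω, f (L ω) * I0 r a ω ∂μ]
          congr 1
          exact Finset.sum_congr rfl fun a ha =>
            hkey r a (Finset.mem_filter.mp ha).2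
  -- RHS pointwise decomposition
  have hpt : ∀ ω, f (L ω) * (if A ω = (fun _ => true) then (1:ℝ) else 0)
        * (∑ r : Fin p → Bool, (1 + Q r ω) * (if R ω = r then (1:ℝ) else 0))
      = (∑ r : Fin p → Bool, f (L ω) * I0 r (fun _ => true) ω)
        + ∑ r : Fin p → Bool, ∑ a ∈ Finset.univ.filter
            (fun b : Fin d → Bool => b ≠ fun _ => true),
            f (L ω) * O r a (Xr r ω) (La a ω) * I1 r ω := by
    intro ω
    have hsum2 : (∑ r : Fin p → Bool, ∑ a ∈ Finset.univ.filter
            (fun b : Fin d → Bool => b ≠ fun _ => true),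
            f (L ω) * O r a (Xr r ω) (La a ω) * I1 r ω)
        = f (L ω) * ∑ r : Fin p → Bool,
            Q r ω * (if (R ω = r ∧ A ω = fun _ => true) then (1:ℝ) else 0) := by
      simp_rw [mul_assoc, ← Finset.mul_sum]
      rw [← hpart1 ω]
    by_cases hAω : A ω = fun _ => true
    · have hQsum : (∑ r : Fin p → Bool,
            Q r ω * (if (R ω = r ∧ A ω = fun _ => true) then (1:ℝ) else 0))
          = Q (R ω) ω := by
        rw [Finset.sum_eq_single (R ω)]
        · simp [hAω]
        · intro b _ hb; simp [Ne.symm hb]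
        · simp
      have hRsum : (∑ r : Fin p → Bool, (1 + Q r ω) * (if R ω = r then (1:ℝ) else 0))
          = 1 + Q (R ω) ω := by
        rw [Finset.sum_eq_single (R ω)]
        · simp
        · intro b _ hb; simp [Ne.symm hb]
        · simp
      have hfirst : (∑ r : Fin p → Bool, f (L ω) * I0 r (fun _ => true) ω)
          = f (L ω) := by
        simp only [hI0, Set.indicator_apply, Set.mem_setOf_eq]
        rw [Finset.sum_eq_single (R ω)]
        · simp [hAω]
        · intro b _ hb; simp [Ne.symm hb]
        · simp
      rw [hsum2, hQsum, hRsum, hfirst, hAω]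
      simp; ring
    · have hfirst : (∑ r : Fin p → Bool, f (L ω) * I0 r (fun _ => true) ω) = 0 := by
        simp only [hI0, Set.indicator_apply, Set.mem_setOf_eq]
        refine Finset.sum_eq_zero fun r _ => ?_
        simp [hAω]
      rw [hsum2, hfirst]
      have : (∑ r : Fin p → Bool,
          Q r ω * (if (R ω = r ∧ A ω = fun _ => true) then (1:ℝ) else 0)) = 0 := by
        refine Finset.sum_eq_zero fun r _ => ?_
        simp [hAω]
      rw [this]
      simp [hAω]
  -- RHS integral decomposition
  have hint_fO : ∀ r, Integrable (fun ω => ∑ a ∈ Finset.univ.filter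
      (fun b : Fin d → Bool => b ≠ fun _ => true),
      f (L ω) * O r a (Xr r ω) (La a ω) * I1 r ω) μ :=
    fun r => integrable_finset_sum _ fun a ha =>
      hint1 r a (Finset.mem_filter.mp ha).2
  have rhs_eq : ∫ ω, f (L ω) * (if A ω = (fun _ => true) then (1:ℝ) else 0)
        * (∑ r : Fin p → Bool, (1 + Q r ω) * (if R ω = r then (1:ℝ) else 0)) ∂μ
      = (∑ r : Fin p → Bool, ∫ ω, f (L ω) * I0 r (fun _ => true) ω ∂μ)
        + ∑ r : Fin p → Bool, ∑ a ∈ Finset.univ.filter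
            (fun b : Fin d → Bool => b ≠ fun _ => true),
            ∫ ω, f (L ω) * O r a (Xr r ω) (La a ω) * I1 r ω ∂μ := by
    calc ∫ ω, f (L ω) * (if A ω = (fun _ => true) then (1:ℝ) else 0)
          * (∑ r : Fin p → Bool, (1 + Q r ω) * (if R ω = r then (1:ℝ) else 0)) ∂μ
        = ∫ ω, ((∑ r : Fin p → Bool, f (L ω) * I0 r (fun _ => true) ω)
            + ∑ r : Fin p → Bool, ∑ a ∈ Finset.univ.filter
                (fun b : Fin d → Bool => b ≠ fun _ => true),
                f (L ω) * O r a (Xr r ω) (La a ω) * I1 r ω) ∂μ := by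
          exact integral_congr_ae (Filter.Eventually.of_forall hpt)
      _ = _ := by
          rw [integral_add (integrable_finset_sum _ fun r _ => hfI0int r _)
            (integrable_finset_sum _ fun r _ => hint_fO r)]
          congr 1
          · exact integral_finset_sum _ fun r _ => hfI0int r _
          · rw [integral_finset_sum _ fun r _ => hint_fO r]
            exact Finset.sum_congr rfl fun r _ =>
              integral_finset_sum _ fun a ha =>
                hint1 r a (Finset.mem_filter.mp ha).2
  rw [lhs_eq, rhs_eq]
end

section
/- Exponential tilting sensitivity model is well-posed: suppose the perturbed odds assumption P(R = r, A = a | x_r, ℓ)/P(R ≥ r, A = 1_d | x_r, ℓ) = O_{r,a}(x_r, ℓ_a) exp(δ_{ā}ᵀ ℓ_{ā}) holds for all a ≠ 1_d. Then for any integrable f, E[f(L) I(R = r, A = a)] = E[ f(L) O_{r,a}(X_r, L_a) exp(δ_{ā}ᵀ L_{ā}) I(R ≥ r, A = 1_d) ]. When δ = 0 this reduces to the ACCMV IPW identity. -/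
open MeasureTheory Set

/-- **Exponential-tilting sensitivity model is well posed.**
Suppose the perturbed odds assumption
`P(R = r, A = a | X_r, L) = O_{r,a}(X_r, L_a) · exp(δ_ā ᵀ L_ā) · P(R ≥ r, A = 1_d | X_r, L)`
holds for patterns `r` and `a ≠ 1_d`, where `δ_ā` is a fixed sensitivity vector on the
coordinates missing under `a`. Then for any integrable `f`,
`E[f(L) I(R = r, A = a)] = E[f(L) O_{r,a}(X_r, L_a) exp(δ_ā ᵀ L_ā) I(R ≥ r, A = 1_d)]`.
(When `δ_ā = 0` the exponential factor is identically `1` and this is exactly the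
ACCMV IPW identity.) -/
theorem accmv_exponential_tilting_identity
    {Ω : Type*} [MeasurableSpace Ω] (μ : Measure Ω) [IsProbabilityMeasure μ]
    {p d : ℕ} (X : Ω → Fin p → ℝ) (L : Ω → Fin d → ℝ)
    (R : Ω → Fin p → Bool) (A : Ω → Fin d → Bool)
    (hX : Measurable X) (hL : Measurable L) (hR : Measurable R) (hA : Measurable A)
    (r : Fin p → Bool) (a : Fin d → Bool) (ha : a ≠ fun _ => true)
    (f : (Fin d → ℝ) → ℝ) (hf : Measurable f)
    (O : ({i : Fin p // r i = true} → ℝ) → ({j : Fin d // a j = true} → ℝ) → ℝ)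
    -- the sensitivity vector `δ_ā`, indexed by the coordinates missing under `a`
    (δ : {j : Fin d // a j = false} → ℝ)
    -- observed subvectors and missing part of `L`
    (Xr : Ω → {i : Fin p // r i = true} → ℝ) (hXr : Xr = fun ω i => X ω i.1)
    (La : Ω → {j : Fin d // a j = true} → ℝ) (hLa : La = fun ω j => L ω j.1)
    -- indicators
    (I0 : Ω → ℝ)
    (hI0 : I0 = ({ω | R ω = r ∧ A ω = a} : Set Ω).indicator fun _ => (1 : ℝ))
    (I1 : Ω → ℝ)
    (hI1 : I1 = ({ω | (∀ i, r i = true → R ω i = true) ∧ A ω = fun _ => true} :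
      Set Ω).indicator fun _ => (1 : ℝ))
    -- σ-algebra generated by `(X_r, L)`
    (m : MeasurableSpace Ω)
    (hm : m = MeasurableSpace.comap (fun ω => (Xr ω, L ω)) inferInstance)
    -- perturbed (exponentially tilted) odds assumption
    (htilt : μ[I0 | m] =ᵐ[μ] fun ω =>
      O (Xr ω) (La ω) * Real.exp (∑ j : {j : Fin d // a j = false}, δ j * L ω j.1)
        * (μ[I1 | m]) ω)
    (hint0 : Integrable (fun ω => f (L ω) * I0 ω) μ)
    (hint1 : Integrable (fun ω =>
      f (L ω) * O (Xr ω) (La ω)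
        * Real.exp (∑ j : {j : Fin d // a j = false}, δ j * L ω j.1) * I1 ω) μ) :
    ∫ ω, f (L ω) * I0 ω ∂μ
      = ∫ ω, f (L ω) * O (Xr ω) (La ω)
          * Real.exp (∑ j : {j : Fin d // a j = false}, δ j * L ω j.1) * I1 ω ∂μ := by
  rename_i mΩ hprob
  subst hXr
  letI : MeasurableSpace Ω := mΩ
  -- m ≤ ambient
  have hXrL : Measurable[mΩ] fun ω => ((fun i : {i : Fin p // r i = true} => X ω i.1), L ω) :=
    (measurable_pi_iff.mpr fun i : {i : Fin p // r i = true} =>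
      (measurable_pi_apply i.1).comp hX).prodMk hL
  have hm_le : m ≤ mΩ := hm ▸ hXrL.comap_le
  haveI : SigmaFinite (μ.trim hm_le) := by infer_instance
  -- measurability of L w.r.t. m
  have hLm : Measurable[m] L := by
    have : Measurable[m] fun ω => ((fun i : {i : Fin p // r i = true} => X ω i.1), L ω) :=
      Measurable.of_comap_le (le_of_eq hm.symm)
    exact (measurable_snd.comp this)
  have hfL : StronglyMeasurable[m] fun ω => f (L ω) := (hf.comp hLm).stronglyMeasurable
  -- integrability of indicators
  have hI0meas : MeasurableSet[mΩ] {ω | R ω = r ∧ A ω = a} :=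
    (hR (measurableSet_singleton r)).inter (hA (measurableSet_singleton a))
  have hI1meas : MeasurableSet[mΩ]
      {ω | (∀ i, r i = true → R ω i = true) ∧ A ω = fun _ => true} := by
    rw [setOf_and]
    refine MeasurableSet.inter ?_ (hA (measurableSet_singleton (fun _ => true)))
    · rw [setOf_forall]
      refine MeasurableSet.iInter fun i => ?_
      by_cases hri : r i = true
      · simp only [hri, forall_true_left]
        exact (measurable_pi_apply i).comp hR (measurableSet_singleton true)
      · simp [hri]
  have hI0int : Integrable I0 μ := by
    rw [hI0]; exact (integrable_const (1 : ℝ)).indicator hI0meas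
  have hI1int : Integrable I1 μ := by
    rw [hI1]; exact (integrable_const (1 : ℝ)).indicator hI1meas
  have hI1nonneg : ∀ ω, 0 ≤ I1 ω := by
    intro ω; rw [hI1]; exact indicator_nonneg (fun _ _ => zero_le_one) ω
  set g0 : Ω → ℝ := μ[I0 | m] with hg0
  set g1 : Ω → ℝ := μ[I1 | m] with hg1
  -- I1 vanishes a.e. on {g1 = 0}
  have hsm : MeasurableSet[m] {ω | g1 ω = 0} :=
    stronglyMeasurable_condExp.measurable (measurableSet_singleton 0)
  have hs : MeasurableSet[mΩ] {ω | g1 ω = 0} := hm_le _ hsm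
  have hI1zero : ∀ᵐ ω ∂μ, g1 ω = 0 → I1 ω = 0 := by
    have hInt0 : ∫ ω in {ω | g1 ω = 0}, I1 ω ∂μ = 0 := by
      rw [← setIntegral_condExp hm_le hI1int hsm]
      exact setIntegral_eq_zero_of_forall_eq_zero fun x hx => hx
    have := (setIntegral_eq_zero_iff_of_nonneg_ae
      (ae_of_all _ fun ω => hI1nonneg ω : 0 ≤ᵐ[μ.restrict {ω | g1 ω = 0}] I1)
      hI1int.integrableOn).mp hInt0
    have h2 := (ae_restrict_iff' hs).mp this
    filter_upwards [h2] with ω hω h0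
    exact hω h0
  -- the m-measurable substitute
  set h : Ω → ℝ := fun ω => if g1 ω = 0 then 0 else f (L ω) * (g0 ω / g1 ω) with hh
  have hhm : StronglyMeasurable[m] h := by
    refine Measurable.stronglyMeasurable ?_
    exact Measurable.ite hsm measurable_const
      ((hf.comp hLm).mul (stronglyMeasurable_condExp.measurable.div
        stronglyMeasurable_condExp.measurable))
  -- h * I1 equals the RHS integrand a.e.
  have hEq1 : ∀ᵐ ω ∂μ, h ω * I1 ω
      = f (L ω) * O ((fun i => X ω i.1)) (La ω)
        * Real.exp (∑ j : {j : Fin d // a j = false}, δ j * L ω j.1) * I1 ω := by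
    filter_upwards [htilt, hI1zero] with ω hω hz
    by_cases h0 : g1 ω = 0
    · simp [hh, h0, hz h0]
    · have : g0 ω / g1 ω
          = O ((fun i => X ω i.1)) (La ω)
            * Real.exp (∑ j : {j : Fin d // a j = false}, δ j * L ω j.1) := by
        rw [hω]; field_simp
      simp only [hh, if_neg h0, this]; ring
  -- h * g1 equals f(L) * g0 a.e.
  have hEq2 : ∀ᵐ ω ∂μ, h ω * g1 ω = f (L ω) * g0 ω := by
    filter_upwards [htilt] with ω hω
    by_cases h0 : g1 ω = 0
    · simp [hh, h0, hω]
    · simp only [hh, if_neg h0]; field_simp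
  have hintH : Integrable (fun ω => h ω * I1 ω) μ := hint1.congr (hEq1.mono fun ω e => e.symm)
  calc ∫ ω, f (L ω) * I0 ω ∂μ
      = ∫ ω, (μ[fun ω => f (L ω) * I0 ω | m]) ω ∂μ := (integral_condExp hm_le).symm
    _ = ∫ ω, f (L ω) * g0 ω ∂μ :=
        integral_congr_ae (condExp_mul_of_stronglyMeasurable_left hfL hint0 hI0int)
    _ = ∫ ω, h ω * g1 ω ∂μ := (integral_congr_ae hEq2).symm
    _ = ∫ ω, (μ[fun ω => h ω * I1 ω | m]) ω ∂μ :=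
        (integral_congr_ae (condExp_mul_of_stronglyMeasurable_left hhm hintH hI1int)).symm
    _ = ∫ ω, h ω * I1 ω ∂μ := integral_condExp hm_le
    _ = _ := integral_congr_ae hEq1
end
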